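/- arXiv:2507.22818 — 4 statements merged into one kernel-verified Lean document; each statement's English description precedes it below -/
import Mathlib

section
/- Let W > 0, let σ, κ : ℝ → ℝ be continuous and strictly positive on [0,W], and let a > 0, b > 0, E ∈ ℝ. Suppose (φe¹, φl¹) and (φe², φl²) are both solutions of the 1D coupled porous-electrode system on [0,W], and their Neumann data agree: σ(0)·(φe¹)'(0) = σ(0)·(φe²)'(0), σ(W)·(φe¹)'(W) = σ(W)·(φe²)'(W), κ(0)·(φl¹)'(0) = κ(0)·(φl²)'(0), and κ(W)·(φl¹)'(W) = κ(W)·(φl²)'(W). Then there exists a constant C ∈ ℝ such that φe¹(x) = φe²(x) + C and φl¹(x) = φl²(x) + C for all x ∈ [0,W]. -/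
open Set Filter Topology

noncomputable section

/-- `(φe, φl)` is a solution of the 1D coupled porous-electrode system on `[0, W]`:
`φe, φl` are C¹ on `[0,W]`, the fluxes `σ·φe'` and `κ·φl'` are C¹ on `[0,W]`, and
`(σ·φe')' = a·sinh(b·(φe − φl − E))`, `(κ·φl')' = −a·sinh(b·(φe − φl − E))` on `[0,W]`. -/
def IsSolution1D (W : ℝ) (σ κ : ℝ → ℝ) (a b E : ℝ) (φe φl : ℝ → ℝ) : Prop :=
  ContDiffOn ℝ 1 φe (Icc 0 W) ∧ ContDiffOn ℝ 1 φl (Icc 0 W) ∧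
  ContDiffOn ℝ 1 (fun x => σ x * deriv φe x) (Icc 0 W) ∧
  ContDiffOn ℝ 1 (fun x => κ x * deriv φl x) (Icc 0 W) ∧
  (∀ x ∈ Icc 0 W, deriv (fun y => σ y * deriv φe y) x
      = a * Real.sinh (b * (φe x - φl x - E))) ∧
  (∀ x ∈ Icc 0 W, deriv (fun y => κ y * deriv φl y) x
      = -(a * Real.sinh (b * (φe x - φl x - E))))

/-
Energy method. Pair the fluxes of the differences with the differences themselves,
`F = (σ δφe')·δφe + (κ δφl')·δφl`. Differentiating and using the equations,
`F' = σ (δφe')² + κ (δφl')² + a (sinh(b η₁) − sinh(b η₂)) (η₁ − η₂)` with `η = φe − φl − E`,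
which is nonnegative because `sinh` is increasing. The Neumann data make `F` vanish at both ends,
so the monotone `F` vanishes identically, and so does `F'`. Hence `δφe' = δφl' = 0` and `η₁ = η₂`,
i.e. `δφe` and `δφl` are the same constant.
-/

theorem StrictMono.sub_mul_sub_pos {α : Type*} [Ring α] [LinearOrder α] [IsStrictOrderedRing α]
    {f : α → α} (hf : StrictMono f) {x y : α} (hxy : x ≠ y) : 0 < (f x - f y) * (x - y) := by
  rcases hxy.lt_or_gt with h | h
  · exact mul_pos_of_neg_of_neg (sub_neg.2 (hf h)) (sub_neg.2 h)
  · exact mul_pos (sub_pos.2 (hf h)) (sub_pos.2 h)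

theorem Real.sinh_mul_sub_mul_sub_nonneg {b : ℝ} (hb : 0 ≤ b) (s t : ℝ) :
    0 ≤ (Real.sinh (b * s) - Real.sinh (b * t)) * (s - t) :=
  ((Real.sinh_strictMono.monotone.comp (monotone_mul_left_of_nonneg hb)).monovary
    monotone_id).sub_mul_sub_nonneg t s

theorem MonotoneOn.eq_left_of_eq_right {α β : Type*} [PartialOrder α] [PartialOrder β]
    {f : α → β} {a b : α} (hf : MonotoneOn f (Icc a b)) (hab : f a = f b) {x : α}
    (hx : x ∈ Icc a b) : f x = f a :=
  le_antisymm (hab ▸ hf hx (right_mem_Icc.2 (hx.1.trans hx.2)) hx.2)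
    (hf (left_mem_Icc.2 (hx.1.trans hx.2)) hx hx.1)

section Interval

variable {f g : ℝ → ℝ} {a b : ℝ}

theorem ContDiffOn.hasDerivAt_of_mem_Ioo (hf : ContDiffOn ℝ 1 f (Icc a b)) {x : ℝ}
    (hx : x ∈ Ioo a b) : HasDerivAt f (deriv f x) x :=
  ((hf.differentiableOn one_ne_zero) x (Ioo_subset_Icc_self hx)).differentiableAt
    (Icc_mem_nhds hx.1 hx.2) |>.hasDerivAt

theorem eq_left_of_hasDerivAt_zero (hf : ContinuousOn f (Icc a b))
    (hf' : ∀ x ∈ Ioo a b, HasDerivAt f 0 x) {x : ℝ} (hx : x ∈ Icc a b) : f x = f a := by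
  rcases hx.1.eq_or_lt with rfl | hax
  · rfl
  obtain ⟨c, hc, hslope⟩ := exists_hasDerivAt_eq_slope f (fun _ => 0) hax
    (hf.mono (Icc_subset_Icc_right hx.2))
    fun y hy => hf' y ⟨hy.1, hy.2.trans_le hx.2⟩
  rw [eq_comm, div_eq_zero_iff, sub_eq_zero] at hslope
  exact hslope.resolve_right (sub_ne_zero.2 hax.ne')

theorem sub_eq_sub_left_of_deriv_eq (hf : ContDiffOn ℝ 1 f (Icc a b))
    (hg : ContDiffOn ℝ 1 g (Icc a b)) (hfg : ∀ x ∈ Ioo a b, deriv f x = deriv g x) {x : ℝ}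
    (hx : x ∈ Icc a b) : f x - g x = f a - g a :=
  eq_left_of_hasDerivAt_zero (f := fun y => f y - g y) (hf.continuousOn.sub hg.continuousOn)
    (fun y hy => by
      simpa only [hfg y hy, sub_self] using
        (hf.hasDerivAt_of_mem_Ioo hy).fun_sub (hg.hasDerivAt_of_mem_Ioo hy))
    hx

end Interval

section EnergyMethod

variable (σ κ : ℝ → ℝ) (a b E : ℝ) (φe₁ φl₁ φe₂ φl₂ : ℝ → ℝ)

def overpotential (φe φl : ℝ → ℝ) (x : ℝ) : ℝ :=
  φe x - φl x - E

def energyFlux (x : ℝ) : ℝ :=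
  (σ x * deriv φe₁ x - σ x * deriv φe₂ x) * (φe₁ x - φe₂ x) +
    (κ x * deriv φl₁ x - κ x * deriv φl₂ x) * (φl₁ x - φl₂ x)

def dissipation (x : ℝ) : ℝ :=
  σ x * (deriv φe₁ x - deriv φe₂ x) ^ 2 + κ x * (deriv φl₁ x - deriv φl₂ x) ^ 2 +
    a * ((Real.sinh (b * overpotential E φe₁ φl₁ x) - Real.sinh (b * overpotential E φe₂ φl₂ x)) *
      (overpotential E φe₁ φl₁ x - overpotential E φe₂ φl₂ x))

variable {σ κ a b E φe₁ φl₁ φe₂ φl₂}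

theorem energyFlux_eq_zero {x : ℝ} (he : σ x * deriv φe₁ x = σ x * deriv φe₂ x)
    (hl : κ x * deriv φl₁ x = κ x * deriv φl₂ x) : energyFlux σ κ φe₁ φl₁ φe₂ φl₂ x = 0 := by
  simp [energyFlux, he, hl]

theorem dissipation_nonneg {x : ℝ} (hσ : 0 ≤ σ x) (hκ : 0 ≤ κ x) (ha : 0 ≤ a) (hb : 0 ≤ b) :
    0 ≤ dissipation σ κ a b E φe₁ φl₁ φe₂ φl₂ x := by
  unfold dissipation
  have := Real.sinh_mul_sub_mul_sub_nonneg hb (overpotential E φe₁ φl₁ x)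
    (overpotential E φe₂ φl₂ x)
  positivity

theorem eq_of_dissipation_eq_zero {x : ℝ} (hσ : 0 < σ x) (hκ : 0 < κ x) (ha : 0 < a)
    (hb : 0 < b) (h : dissipation σ κ a b E φe₁ φl₁ φe₂ φl₂ x = 0) :
    deriv φe₁ x = deriv φe₂ x ∧ deriv φl₁ x = deriv φl₂ x ∧
      overpotential E φe₁ φl₁ x = overpotential E φe₂ φl₂ x := by
  have hsinh : StrictMono fun t => Real.sinh (b * t) :=
    Real.sinh_strictMono.comp (strictMono_mul_left_of_pos hb)
  have hsinh_nonneg := Real.sinh_mul_sub_mul_sub_nonneg hb.le (overpotential E φe₁ φl₁ x)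
    (overpotential E φe₂ φl₂ x)
  unfold dissipation at h
  rw [add_eq_zero_iff_of_nonneg (by positivity) (by positivity),
    add_eq_zero_iff_of_nonneg (by positivity) (by positivity)] at h
  obtain ⟨⟨he, hl⟩, hη⟩ := h
  simp only [mul_eq_zero, hσ.ne', hκ.ne', false_or, pow_eq_zero_iff two_ne_zero,
    sub_eq_zero] at he hl
  rw [mul_eq_zero, or_iff_right ha.ne'] at hη
  refine ⟨he, hl, ?_⟩
  by_contra hne
  exact (hsinh.sub_mul_sub_pos hne).ne' hη

variable {W : ℝ}

theorem IsSolution1D.hasDerivAt_energyFlux (h₁ : IsSolution1D W σ κ a b E φe₁ φl₁)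
    (h₂ : IsSolution1D W σ κ a b E φe₂ φl₂) {x : ℝ} (hx : x ∈ Ioo 0 W) :
    HasDerivAt (energyFlux σ κ φe₁ φl₁ φe₂ φl₂) (dissipation σ κ a b E φe₁ φl₁ φe₂ φl₂ x) x := by
  obtain ⟨he₁, hl₁, hfe₁, hfl₁, heq₁, hleq₁⟩ := h₁
  obtain ⟨he₂, hl₂, hfe₂, hfl₂, heq₂, hleq₂⟩ := h₂
  have hxI := Ioo_subset_Icc_self hx
  have hfe₁' := hfe₁.hasDerivAt_of_mem_Ioo hx
  have hfe₂' := hfe₂.hasDerivAt_of_mem_Ioo hx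
  have hfl₁' := hfl₁.hasDerivAt_of_mem_Ioo hx
  have hfl₂' := hfl₂.hasDerivAt_of_mem_Ioo hx
  rw [heq₁ x hxI] at hfe₁'
  rw [heq₂ x hxI] at hfe₂'
  rw [hleq₁ x hxI] at hfl₁'
  rw [hleq₂ x hxI] at hfl₂'
  refine (((hfe₁'.sub hfe₂').mul ((he₁.hasDerivAt_of_mem_Ioo hx).sub
    (he₂.hasDerivAt_of_mem_Ioo hx))).add ((hfl₁'.sub hfl₂').mul
    ((hl₁.hasDerivAt_of_mem_Ioo hx).sub (hl₂.hasDerivAt_of_mem_Ioo hx)))).congr_deriv ?_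
  simp only [dissipation, overpotential, Pi.sub_apply]
  ring

theorem IsSolution1D.continuousOn_energyFlux (h₁ : IsSolution1D W σ κ a b E φe₁ φl₁)
    (h₂ : IsSolution1D W σ κ a b E φe₂ φl₂) :
    ContinuousOn (energyFlux σ κ φe₁ φl₁ φe₂ φl₂) (Icc 0 W) := by
  obtain ⟨he₁, hl₁, hfe₁, hfl₁, -⟩ := h₁
  obtain ⟨he₂, hl₂, hfe₂, hfl₂, -⟩ := h₂
  exact ((hfe₁.continuousOn.sub hfe₂.continuousOn).mul (he₁.continuousOn.sub he₂.continuousOn)).add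
    ((hfl₁.continuousOn.sub hfl₂.continuousOn).mul (hl₁.continuousOn.sub hl₂.continuousOn))

theorem IsSolution1D.dissipation_eq_zero (h₁ : IsSolution1D W σ κ a b E φe₁ φl₁)
    (h₂ : IsSolution1D W σ κ a b E φe₂ φl₂) (hσ : ∀ x ∈ Ioo 0 W, 0 ≤ σ x)
    (hκ : ∀ x ∈ Ioo 0 W, 0 ≤ κ x) (ha : 0 ≤ a) (hb : 0 ≤ b)
    (h₀ : energyFlux σ κ φe₁ φl₁ φe₂ φl₂ 0 = 0) (hW : energyFlux σ κ φe₁ φl₁ φe₂ φl₂ W = 0)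
    {x : ℝ} (hx : x ∈ Ioo 0 W) : dissipation σ κ a b E φe₁ φl₁ φe₂ φl₂ x = 0 := by
  have hmono : MonotoneOn (energyFlux σ κ φe₁ φl₁ φe₂ φl₂) (Icc 0 W) := by
    refine monotoneOn_of_hasDerivWithinAt_nonneg (f' := dissipation σ κ a b E φe₁ φl₁ φe₂ φl₂)
      (convex_Icc 0 W) (h₁.continuousOn_energyFlux h₂) (fun y hy => ?_) fun y hy => ?_ <;>
      rw [interior_Icc] at hy
    · exact (h₁.hasDerivAt_energyFlux h₂ hy).hasDerivWithinAt
    · exact dissipation_nonneg (hσ y hy) (hκ y hy) ha hb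
  have hzero : energyFlux σ κ φe₁ φl₁ φe₂ φl₂ =ᶠ[𝓝 x] fun _ => 0 :=
    Filter.eventually_of_mem (Icc_mem_nhds hx.1 hx.2) fun y hy =>
      (hmono.eq_left_of_eq_right (h₀.trans hW.symm) hy).trans h₀
  rw [← (h₁.hasDerivAt_energyFlux h₂ hx).deriv, hzero.deriv_eq, deriv_const]

end EnergyMethod

theorem uniqueness_up_to_shared_constant_general
    (W : ℝ) (hW : 0 < W) (σ κ : ℝ → ℝ)
    (hσpos : ∀ x ∈ Icc 0 W, 0 < σ x) (hκpos : ∀ x ∈ Icc 0 W, 0 < κ x)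
    (a b E : ℝ) (ha : 0 < a) (hb : 0 < b)
    (φe₁ φl₁ φe₂ φl₂ : ℝ → ℝ)
    (h₁ : IsSolution1D W σ κ a b E φe₁ φl₁)
    (h₂ : IsSolution1D W σ κ a b E φe₂ φl₂)
    (hbc₁ : σ 0 * deriv φe₁ 0 = σ 0 * deriv φe₂ 0)
    (hbc₂ : σ W * deriv φe₁ W = σ W * deriv φe₂ W)
    (hbc₃ : κ 0 * deriv φl₁ 0 = κ 0 * deriv φl₂ 0)
    (hbc₄ : κ W * deriv φl₁ W = κ W * deriv φl₂ W) :
    ∃ C : ℝ, ∀ x ∈ Icc 0 W, φe₁ x = φe₂ x + C ∧ φl₁ x = φl₂ x + C := by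
  have hσ (x) (hx : x ∈ Ioo 0 W) := hσpos x (Ioo_subset_Icc_self hx)
  have hκ (x) (hx : x ∈ Ioo 0 W) := hκpos x (Ioo_subset_Icc_self hx)
  have hequal (x) (hx : x ∈ Ioo 0 W) := eq_of_dissipation_eq_zero (hσ x hx) (hκ x hx) ha hb <|
    h₁.dissipation_eq_zero h₂ (fun y hy => (hσ y hy).le) (fun y hy => (hκ y hy).le) ha.le hb.le
      (energyFlux_eq_zero hbc₁ hbc₃) (energyFlux_eq_zero hbc₂ hbc₄) hx
  have hδe (x) (hx : x ∈ Icc 0 W) :=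
    sub_eq_sub_left_of_deriv_eq h₁.1 h₂.1 (fun y hy => (hequal y hy).1) hx
  have hδl (x) (hx : x ∈ Icc 0 W) :=
    sub_eq_sub_left_of_deriv_eq h₁.2.1 h₂.2.1 (fun y hy => (hequal y hy).2.1) hx
  have hmid : W / 2 ∈ Ioo 0 W := ⟨by linarith, by linarith⟩
  have hη := (hequal _ hmid).2.2
  have hδe_mid := hδe _ (Ioo_subset_Icc_self hmid)
  have hδl_mid := hδl _ (Ioo_subset_Icc_self hmid)
  unfold overpotential at hη
  exact ⟨φe₁ 0 - φe₂ 0, fun x hx => ⟨by linarith [hδe x hx], by linarith [hδl x hx]⟩⟩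

/-- Uniqueness up to a shared additive constant for the galvanostatic (all-Neumann)
1D coupled porous-electrode system. -/
theorem uniqueness_up_to_shared_constant
    (W : ℝ) (hW : 0 < W) (σ κ : ℝ → ℝ)
    (hσc : ContinuousOn σ (Icc 0 W)) (hκc : ContinuousOn κ (Icc 0 W))
    (hσpos : ∀ x ∈ Icc 0 W, 0 < σ x) (hκpos : ∀ x ∈ Icc 0 W, 0 < κ x)
    (a b E : ℝ) (ha : 0 < a) (hb : 0 < b)
    (φe₁ φl₁ φe₂ φl₂ : ℝ → ℝ)
    (h₁ : IsSolution1D W σ κ a b E φe₁ φl₁)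
    (h₂ : IsSolution1D W σ κ a b E φe₂ φl₂)
    (hbc₁ : σ 0 * deriv φe₁ 0 = σ 0 * deriv φe₂ 0)
    (hbc₂ : σ W * deriv φe₁ W = σ W * deriv φe₂ W)
    (hbc₃ : κ 0 * deriv φl₁ 0 = κ 0 * deriv φl₂ 0)
    (hbc₄ : κ W * deriv φl₁ W = κ W * deriv φl₂ W) :
    ∃ C : ℝ, ∀ x ∈ Icc 0 W, φe₁ x = φe₂ x + C ∧ φl₁ x = φl₂ x + C :=
  uniqueness_up_to_shared_constant_general W hW σ κ hσpos hκpos a b E ha hb φe₁ φl₁ φe₂ φl₂ h₁ h₂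
    hbc₁ hbc₂ hbc₃ hbc₄
end
end

section
/- Let W > 0, let σ, κ : ℝ → ℝ be continuous on [0,W], and let a, b, E ∈ ℝ. Suppose (φe, φl) is a solution of the 1D coupled porous-electrode system on [0,W] satisfying the zero-flux conditions σ(W)·φe'(W) = 0 and κ(0)·φl'(0) = 0. Then the remaining boundary fluxes are determined by charge conservation: σ(0)·φe'(0) = κ(W)·φl'(W) = −∫₀^W a·sinh(b·(φe(x) − φl(x) − E)) dx. In particular, if the Dirichlet substitution method prescribes κ(W)·φl'(W) = j for some j ∈ ℝ, then the implicit flux at x = 0 equals the original galvanostatic Neumann value: σ(0)·φe'(0) = j. -/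
/-! Integrating the two flux equations over `[0, W]` shows that the electrode flux gains, and the
electrolyte flux loses, the total reaction current `∫₀^W a sinh(b(φe - φl - E))`; the two
zero-flux conditions then pin down the remaining boundary fluxes. -/

open Set

noncomputable section

theorem integral_eq_sub_of_contDiffOn_of_deriv_eq {a b : ℝ} (hab : a ≤ b) {g f : ℝ → ℝ}
    (hg : ContDiffOn ℝ 1 g (Icc a b)) (hgf : ∀ x ∈ Ioo a b, deriv g x = f x)
    (hf : ContinuousOn f (Icc a b)) :
    ∫ x in a..b, f x = g b - g a := by
  refine intervalIntegral.integral_eq_sub_of_hasDerivAt_of_le hab hg.continuousOn (fun x hx => ?_)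
    (hf.intervalIntegrable_of_Icc hab)
  have hgx : DifferentiableAt ℝ g x :=
    (hg.differentiableOn one_ne_zero x (Ioo_subset_Icc_self hx)).differentiableAt
      (Icc_mem_nhds hx.1 hx.2)
  exact hgf x hx ▸ hgx.hasDerivAt

theorem charge_conservation_fluxes_general
    (W : ℝ) (hW : 0 < W) (σ κ : ℝ → ℝ)
    (a b E : ℝ) (φe φl : ℝ → ℝ)
    (h : IsSolution1D W σ κ a b E φe φl)
    (hfluxW : σ W * deriv φe W = 0) (hflux0 : κ 0 * deriv φl 0 = 0) :
    σ 0 * deriv φe 0 = κ W * deriv φl W ∧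
    σ 0 * deriv φe 0 = -∫ x in (0:ℝ)..W, a * Real.sinh (b * (φe x - φl x - E)) ∧
    (∀ j : ℝ, κ W * deriv φl W = j → σ 0 * deriv φe 0 = j) := by
  obtain ⟨hφe, hφl, hσφe, hκφl, hσφe', hκφl'⟩ := h
  have hreaction : ContinuousOn (fun x => a * Real.sinh (b * (φe x - φl x - E))) (Icc 0 W) :=
    continuousOn_const.mul <| Real.continuous_sinh.comp_continuousOn <|
      continuousOn_const.mul ((hφe.continuousOn.sub hφl.continuousOn).sub continuousOn_const)
  have electrode := integral_eq_sub_of_contDiffOn_of_deriv_eq hW.le hσφe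
    (fun x hx => hσφe' x (Ioo_subset_Icc_self hx)) hreaction
  have electrolyte := integral_eq_sub_of_contDiffOn_of_deriv_eq hW.le hκφl
    (fun x hx => hκφl' x (Ioo_subset_Icc_self hx)) hreaction.neg
  rw [intervalIntegral.integral_neg] at electrolyte
  exact ⟨by linarith, by linarith, fun j hj => by linarith⟩

/-- Charge conservation determines the remaining boundary fluxes: with zero flux for the
electrode at `x = W` and for the electrolyte at `x = 0`, the electrode flux at `x = 0` equals
the electrolyte flux at `x = W`, both equal to minus the total reaction current; in particular,
prescribing the Dirichlet-substitution flux `κ·φl'(W) = j` recovers `σ·φe'(0) = j`. -/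
theorem charge_conservation_fluxes
    (W : ℝ) (hW : 0 < W) (σ κ : ℝ → ℝ)
    (hσc : ContinuousOn σ (Icc 0 W)) (hκc : ContinuousOn κ (Icc 0 W))
    (a b E : ℝ) (φe φl : ℝ → ℝ)
    (h : IsSolution1D W σ κ a b E φe φl)
    (hfluxW : σ W * deriv φe W = 0) (hflux0 : κ 0 * deriv φl 0 = 0) :
    σ 0 * deriv φe 0 = κ W * deriv φl W ∧
    σ 0 * deriv φe 0 = -∫ x in (0:ℝ)..W, a * Real.sinh (b * (φe x - φl x - E)) ∧
    (∀ j : ℝ, κ W * deriv φl W = j → σ 0 * deriv φe 0 = j) :=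
  charge_conservation_fluxes_general W hW σ κ a b E φe φl h hfluxW hflux0
end
end

section
/- Let W > 0, H > 0, let σ > 0 and κ > 0 be real constants, and let a > 0, b > 0, E ∈ ℝ. Let Q = [0,W] × [0,H] ⊂ ℝ². Suppose (φe¹, φl¹) and (φe², φl²) are pairs of functions ℝ² → ℝ, each C² on an open set containing Q, satisfying for all p ∈ Q: σ·Δφe(p) = a·sinh(b·(φe(p) − φl(p) − E)) and κ·Δφl(p) = −a·sinh(b·(φe(p) − φl(p) − E)), where Δ denotes the Laplacian (sum of the two pure second partial derivatives). Suppose further that the normal derivatives of the two solutions agree on the boundary of Q: ∂φe¹/∂x = ∂φe²/∂x and ∂φl¹/∂x = ∂φl²/∂x at all points of {0,W} × [0,H], and ∂φe¹/∂y = ∂φe²/∂y and ∂φl¹/∂y = ∂φl²/∂y at all points of [0,W] × {0,H}. Then there exists a constant C ∈ ℝ such that φe¹ = φe² + C and φl¹ = φl² + C on Q. -/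
open Set

noncomputable section

/-- Partial derivative in the first coordinate of `f : ℝ × ℝ → ℝ`. -/
def pderivX (f : ℝ × ℝ → ℝ) : ℝ × ℝ → ℝ := fun p => deriv (fun t => f (t, p.2)) p.1

/-- Partial derivative in the second coordinate of `f : ℝ × ℝ → ℝ`. -/
def pderivY (f : ℝ × ℝ → ℝ) : ℝ × ℝ → ℝ := fun p => deriv (fun t => f (p.1, t)) p.2

/-- Laplacian of `f : ℝ × ℝ → ℝ`: sum of the two pure second partial derivatives. -/
def lap (f : ℝ × ℝ → ℝ) : ℝ × ℝ → ℝ := fun p => pderivX (pderivX f) p + pderivY (pderivY f) p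

/-!
The differences `u = φe₁ - φe₂` and `v = φl₁ - φl₂` have zero Neumann data, and with
`ηᵢ = φeᵢ - φlᵢ - E` they satisfy `σ Δu = -κ Δv = a (sinh (b η₁) - sinh (b η₂))` and
`u - v = η₁ - η₂`. Green's first identity on the rectangle, applied to `u` and to `v`, gives
`∫_Q σ (u Δu + |∇u|²) + κ (v Δv + |∇v|²) = 0`, while
`σ u Δu + κ v Δv = a (sinh (b η₁) - sinh (b η₂)) (η₁ - η₂) ≥ 0` because `sinh` is increasing.
Hence the continuous nonnegative integrand vanishes in the interior: `∇u = ∇v = 0` and `η₁ = η₂`,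
so `u` and `v` are one and the same constant on `Q`.
-/

open MeasureTheory Filter Topology

theorem Monotone.sub_mul_sub_nonneg {α : Type*} [Ring α] [LinearOrder α] [IsOrderedRing α]
    {f : α → α} (hf : Monotone f) (x y : α) : 0 ≤ (f x - f y) * (x - y) := by
  rcases le_total x y with h | h
  · exact mul_nonneg_of_nonpos_of_nonpos (sub_nonpos.2 (hf h)) (sub_nonpos.2 h)
  · exact mul_nonneg (sub_nonneg.2 (hf h)) (sub_nonneg.2 h)

theorem StrictMono.eq_of_sub_mul_sub_eq_zero {α : Type*} [Ring α] [NoZeroDivisors α]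
    [LinearOrder α] {f : α → α} (hf : StrictMono f) {x y : α} (h : (f x - f y) * (x - y) = 0) :
    x = y := by
  rcases mul_eq_zero.1 h with h | h
  · exact hf.injective (sub_eq_zero.1 h)
  · exact sub_eq_zero.1 h

theorem eqOn_zero_of_setIntegral_eq_zero_of_nonneg {X : Type*} [TopologicalSpace X]
    [MeasurableSpace X] {μ : Measure X} [μ.IsOpenPosMeasure] {f : X → ℝ} {s t : Set X}
    (hs : IsOpen s) (hst : s ⊆ t) (ht : MeasurableSet t) (hf : ContinuousOn f s)
    (hnn : ∀ x ∈ t, 0 ≤ f x) (hint : IntegrableOn f t μ) (h0 : ∫ x in t, f x ∂μ = 0) :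
    EqOn f 0 s :=
  have hae : f =ᵐ[μ.restrict t] 0 :=
    (setIntegral_eq_zero_iff_of_nonneg_ae (ae_restrict_of_forall_mem ht hnn) hint).1 h0
  Measure.eqOn_open_of_ae_eq (ae_restrict_of_ae_restrict_of_subset hst hae) hs hf
    continuousOn_const

section PartialDerivatives

variable {f g : ℝ × ℝ → ℝ} {p : ℝ × ℝ} {U : Set (ℝ × ℝ)}

theorem pderivX_eq_fderiv (hf : DifferentiableAt ℝ f p) : pderivX f p = fderiv ℝ f p (1, 0) :=
  (hf.hasFDerivAt.comp_hasDerivAt_of_eq p.1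
    ((hasDerivAt_id p.1).prodMk (hasDerivAt_const p.1 p.2)) rfl).deriv

theorem pderivY_eq_fderiv (hf : DifferentiableAt ℝ f p) : pderivY f p = fderiv ℝ f p (0, 1) :=
  (hf.hasFDerivAt.comp_hasDerivAt_of_eq p.2
    ((hasDerivAt_const p.2 p.1).prodMk (hasDerivAt_id p.2)) rfl).deriv

theorem pderivX_sub (hf : DifferentiableAt ℝ f p) (hg : DifferentiableAt ℝ g p) :
    pderivX (f - g) p = pderivX f p - pderivX g p := by
  rw [pderivX_eq_fderiv (hf.sub hg), pderivX_eq_fderiv hf, pderivX_eq_fderiv hg,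
    fderiv_sub hf hg, sub_apply]

theorem pderivY_sub (hf : DifferentiableAt ℝ f p) (hg : DifferentiableAt ℝ g p) :
    pderivY (f - g) p = pderivY f p - pderivY g p := by
  rw [pderivY_eq_fderiv (hf.sub hg), pderivY_eq_fderiv hf, pderivY_eq_fderiv hg,
    fderiv_sub hf hg, sub_apply]

theorem pderivX_mul (hf : DifferentiableAt ℝ f p) (hg : DifferentiableAt ℝ g p) :
    pderivX (f * g) p = pderivX f p * g p + f p * pderivX g p := by
  rw [pderivX_eq_fderiv (hf.mul hg), pderivX_eq_fderiv hf, pderivX_eq_fderiv hg, fderiv_mul hf hg]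
  simp only [add_apply, smul_apply, smul_eq_mul]
  ring

theorem pderivY_mul (hf : DifferentiableAt ℝ f p) (hg : DifferentiableAt ℝ g p) :
    pderivY (f * g) p = pderivY f p * g p + f p * pderivY g p := by
  rw [pderivY_eq_fderiv (hf.mul hg), pderivY_eq_fderiv hf, pderivY_eq_fderiv hg, fderiv_mul hf hg]
  simp only [add_apply, smul_apply, smul_eq_mul]
  ring

theorem Filter.EventuallyEq.pderivX_eq (h : f =ᶠ[𝓝 p] g) : pderivX f p = pderivX g p :=
  (h.comp_tendsto ((continuous_id.prodMk continuous_const).tendsto' p.1 p rfl)).deriv_eq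

theorem Filter.EventuallyEq.pderivY_eq (h : f =ᶠ[𝓝 p] g) : pderivY f p = pderivY g p :=
  (h.comp_tendsto ((continuous_const.prodMk continuous_id).tendsto' p.2 p rfl)).deriv_eq

theorem fderiv_eq_zero_of_pderivX_of_pderivY (hf : DifferentiableAt ℝ f p)
    (hX : pderivX f p = 0) (hY : pderivY f p = 0) : fderiv ℝ f p = 0 := by
  rw [pderivX_eq_fderiv hf] at hX
  rw [pderivY_eq_fderiv hf] at hY
  refine ContinuousLinearMap.prod_ext (ContinuousLinearMap.ext_ring ?_)
    (ContinuousLinearMap.ext_ring ?_) <;> simpa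

variable {m n : WithTop ℕ∞}

theorem ContDiffOn.pderivX_of_isOpen (hf : ContDiffOn ℝ n f U) (hU : IsOpen U)
    (hmn : m + 1 ≤ n) : ContDiffOn ℝ m (pderivX f) U :=
  ((ContinuousLinearMap.apply ℝ ℝ ((1 : ℝ), (0 : ℝ))).contDiff.comp_contDiffOn
    (hf.fderiv_of_isOpen hU hmn)).congr fun _ hq => pderivX_eq_fderiv <|
      (hf.contDiffAt (hU.mem_nhds hq)).differentiableAt
        (zero_lt_one.trans_le (le_add_self.trans hmn)).ne'

theorem ContDiffOn.pderivY_of_isOpen (hf : ContDiffOn ℝ n f U) (hU : IsOpen U)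
    (hmn : m + 1 ≤ n) : ContDiffOn ℝ m (pderivY f) U :=
  ((ContinuousLinearMap.apply ℝ ℝ ((0 : ℝ), (1 : ℝ))).contDiff.comp_contDiffOn
    (hf.fderiv_of_isOpen hU hmn)).congr fun _ hq => pderivY_eq_fderiv <|
      (hf.contDiffAt (hU.mem_nhds hq)).differentiableAt
        (zero_lt_one.trans_le (le_add_self.trans hmn)).ne'

theorem ContDiffOn.continuousOn_lap (hf : ContDiffOn ℝ 2 f U) (hU : IsOpen U) :
    ContinuousOn (lap f) U :=
  ((hf.pderivX_of_isOpen hU (m := 1) le_rfl).pderivX_of_isOpen hU (m := 0) le_rfl).continuousOn.add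
    ((hf.pderivY_of_isOpen hU (m := 1) le_rfl).pderivY_of_isOpen hU (m := 0) le_rfl).continuousOn

theorem lap_sub (hf : ContDiffOn ℝ 2 f U) (hg : ContDiffOn ℝ 2 g U) (hU : IsOpen U)
    (hp : p ∈ U) : lap (f - g) p = lap f p - lap g p := by
  have hdiff {h : ℝ × ℝ → ℝ} {k : WithTop ℕ∞} (hh : ContDiffOn ℝ k h U) (hk : k ≠ 0) {q}
      (hq : q ∈ U) : DifferentiableAt ℝ h q :=
    (hh.contDiffAt (hU.mem_nhds hq)).differentiableAt hk
  have hX : pderivX (f - g) =ᶠ[𝓝 p] pderivX f - pderivX g :=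
    eventually_of_mem (hU.mem_nhds hp) fun _ hq =>
      pderivX_sub (hdiff hf two_ne_zero hq) (hdiff hg two_ne_zero hq)
  have hY : pderivY (f - g) =ᶠ[𝓝 p] pderivY f - pderivY g :=
    eventually_of_mem (hU.mem_nhds hp) fun _ hq =>
      pderivY_sub (hdiff hf two_ne_zero hq) (hdiff hg two_ne_zero hq)
  rw [lap, lap, lap, hX.pderivX_eq, hY.pderivY_eq,
    pderivX_sub (hdiff (hf.pderivX_of_isOpen hU (m := 1) le_rfl) one_ne_zero hp)
      (hdiff (hg.pderivX_of_isOpen hU (m := 1) le_rfl) one_ne_zero hp),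
    pderivY_sub (hdiff (hf.pderivY_of_isOpen hU (m := 1) le_rfl) one_ne_zero hp)
      (hdiff (hg.pderivY_of_isOpen hU (m := 1) le_rfl) one_ne_zero hp)]
  ring

end PartialDerivatives

section Rectangle

variable {x₀ x₁ y₀ y₁ : ℝ} {U : Set (ℝ × ℝ)}

def HasZeroNeumannData (u : ℝ × ℝ → ℝ) (x₀ x₁ y₀ y₁ : ℝ) : Prop :=
  (∀ x ∈ ({x₀, x₁} : Set ℝ), ∀ y ∈ Icc y₀ y₁, pderivX u (x, y) = 0) ∧
    ∀ x ∈ Icc x₀ x₁, ∀ y ∈ ({y₀, y₁} : Set ℝ), pderivY u (x, y) = 0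

theorem HasZeroNeumannData.sub {f g : ℝ × ℝ → ℝ} (hx : x₀ ≤ x₁) (hy : y₀ ≤ y₁) (hU : IsOpen U)
    (hQU : Icc x₀ x₁ ×ˢ Icc y₀ y₁ ⊆ U) (hf : DifferentiableOn ℝ f U)
    (hg : DifferentiableOn ℝ g U)
    (hX : ∀ x ∈ ({x₀, x₁} : Set ℝ), ∀ y ∈ Icc y₀ y₁, pderivX f (x, y) = pderivX g (x, y))
    (hY : ∀ x ∈ Icc x₀ x₁, ∀ y ∈ ({y₀, y₁} : Set ℝ), pderivY f (x, y) = pderivY g (x, y)) :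
    HasZeroNeumannData (f - g) x₀ x₁ y₀ y₁ := by
  have hxI : {x₀, x₁} ⊆ Icc x₀ x₁ := by simp [insert_subset_iff, hx]
  have hyI : {y₀, y₁} ⊆ Icc y₀ y₁ := by simp [insert_subset_iff, hy]
  have hdiff {q} (hq : q ∈ Icc x₀ x₁ ×ˢ Icc y₀ y₁) :
      DifferentiableAt ℝ f q ∧ DifferentiableAt ℝ g q :=
    ⟨hf.differentiableAt (hU.mem_nhds (hQU hq)), hg.differentiableAt (hU.mem_nhds (hQU hq))⟩
  refine ⟨fun x hxb y hy => ?_, fun x hx y hyb => ?_⟩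
  · obtain ⟨hfq, hgq⟩ := hdiff (q := (x, y)) ⟨hxI hxb, hy⟩
    rw [pderivX_sub hfq hgq, hX x hxb y hy, sub_self]
  · obtain ⟨hfq, hgq⟩ := hdiff (q := (x, y)) ⟨hx, hyI hyb⟩
    rw [pderivY_sub hfq hgq, hY x hx y hyb, sub_self]

theorem intervalIntegral_prod_eq_setIntegral_Icc {h : ℝ × ℝ → ℝ} (hx : x₀ ≤ x₁) (hy : y₀ ≤ y₁)
    (hh : IntegrableOn h (Icc x₀ x₁ ×ˢ Icc y₀ y₁)) :
    ∫ x in x₀..x₁, ∫ y in y₀..y₁, h (x, y) = ∫ p in Icc x₀ x₁ ×ˢ Icc y₀ y₁, h p := by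
  have hae := Measure.set_prod_ae_eq (μ := volume) (ν := volume)
    (Ioc_ae_eq_Icc (a := x₀) (b := x₁)) (Ioc_ae_eq_Icc (a := y₀) (b := y₁))
  rw [Measure.volume_eq_prod] at hh ⊢
  rw [← setIntegral_congr_set hae, setIntegral_prod _ (hh.congr_set_ae hae),
    intervalIntegral.integral_of_le hx]
  simp only [intervalIntegral.integral_of_le hy]

theorem setIntegral_pderivX_add_pderivY_eq_zero {F G : ℝ × ℝ → ℝ} (hx : x₀ ≤ x₁)
    (hy : y₀ ≤ y₁) (hU : IsOpen U) (hQU : Icc x₀ x₁ ×ˢ Icc y₀ y₁ ⊆ U)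
    (hF : ContDiffOn ℝ 1 F U) (hG : ContDiffOn ℝ 1 G U)
    (hFb : ∀ x ∈ ({x₀, x₁} : Set ℝ), ∀ y ∈ Icc y₀ y₁, F (x, y) = 0)
    (hGb : ∀ x ∈ Icc x₀ x₁, ∀ y ∈ ({y₀, y₁} : Set ℝ), G (x, y) = 0) :
    ∫ p in Icc x₀ x₁ ×ˢ Icc y₀ y₁, (pderivX F p + pderivY G p) = 0 := by
  have hdiffAt {K : ℝ × ℝ → ℝ} (hK : ContDiffOn ℝ 1 K U) {q} (hq : q ∈ U) :
      DifferentiableAt ℝ K q :=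
    (hK.contDiffAt (hU.mem_nhds hq)).differentiableAt one_ne_zero
  have hdiv : EqOn (fun q => pderivX F q + pderivY G q)
      (fun q => fderiv ℝ F q (1, 0) + fderiv ℝ G q (0, 1)) U := fun q hq => by
    simp only [pderivX_eq_fderiv (hdiffAt hF hq), pderivY_eq_fderiv (hdiffAt hG hq)]
  have hQ : MeasurableSet (Icc x₀ x₁ ×ˢ Icc y₀ y₁) := measurableSet_Icc.prod measurableSet_Icc
  have hint : IntegrableOn (fun q => fderiv ℝ F q (1, 0) + fderiv ℝ G q (0, 1))
      (Icc x₀ x₁ ×ˢ Icc y₀ y₁) :=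
    ((((hF.pderivX_of_isOpen hU (m := 0) le_rfl).continuousOn.add
      (hG.pderivY_of_isOpen hU (m := 0) le_rfl).continuousOn).mono hQU).integrableOn_compact
        (isCompact_Icc.prod isCompact_Icc)).congr_fun (hdiv.mono hQU) hQ
  have hInt : Ioo x₀ x₁ ×ˢ Ioo y₀ y₁ ⊆ U :=
    (Set.prod_mono Ioo_subset_Icc_self Ioo_subset_Icc_self).trans hQU
  rw [setIntegral_congr_fun hQ (hdiv.mono hQU),
    ← intervalIntegral_prod_eq_setIntegral_Icc hx hy hint,
    integral2_divergence_prod_of_hasFDerivAt_off_countable F G (fderiv ℝ F) (fderiv ℝ G)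
      x₀ y₀ x₁ y₁ ∅ countable_empty
      (by rw [uIcc_of_le hx, uIcc_of_le hy]; exact hF.continuousOn.mono hQU)
      (by rw [uIcc_of_le hx, uIcc_of_le hy]; exact hG.continuousOn.mono hQU)
      (fun q hq => (hdiffAt hF (hInt (by simpa [hx, hy] using hq.1))).hasFDerivAt)
      (fun q hq => (hdiffAt hG (hInt (by simpa [hx, hy] using hq.1))).hasFDerivAt)
      (by rwa [uIcc_of_le hx, uIcc_of_le hy])]
  have hGint : ∀ y ∈ ({y₀, y₁} : Set ℝ), ∫ x in x₀..x₁, G (x, y) = 0 := fun y hyb =>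
    (intervalIntegral.integral_congr (g := 0) fun x hxI =>
      hGb x (by rwa [uIcc_of_le hx] at hxI) y hyb).trans intervalIntegral.integral_zero
  have hFint : ∀ x ∈ ({x₀, x₁} : Set ℝ), ∫ y in y₀..y₁, F (x, y) = 0 := fun x hxb =>
    (intervalIntegral.integral_congr (g := 0) fun y hyI =>
      hFb x hxb y (by rwa [uIcc_of_le hy] at hyI)).trans intervalIntegral.integral_zero
  simp [hGint, hFint]

theorem setIntegral_mul_lap_add_sq_eq_zero {u : ℝ × ℝ → ℝ} (hx : x₀ ≤ x₁) (hy : y₀ ≤ y₁)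
    (hU : IsOpen U) (hQU : Icc x₀ x₁ ×ˢ Icc y₀ y₁ ⊆ U) (hu : ContDiffOn ℝ 2 u U)
    (hN : HasZeroNeumannData u x₀ x₁ y₀ y₁) :
    ∫ p in Icc x₀ x₁ ×ˢ Icc y₀ y₁, (u p * lap u p + (pderivX u p ^ 2 + pderivY u p ^ 2)) = 0 := by
  have hu₁ : ContDiffOn ℝ 1 u U := hu.of_le one_le_two
  have hux := hu.pderivX_of_isOpen hU (m := 1) le_rfl
  have huy := hu.pderivY_of_isOpen hU (m := 1) le_rfl
  rw [← setIntegral_pderivX_add_pderivY_eq_zero (F := u * pderivX u) (G := u * pderivY u)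
    hx hy hU hQU (hu₁.mul hux) (hu₁.mul huy)
    (fun x hx y hy => by simp [hN.1 x hx y hy]) (fun x hx y hy => by simp [hN.2 x hx y hy])]
  refine setIntegral_congr_fun (measurableSet_Icc.prod measurableSet_Icc) fun q hq => ?_
  have hdiffAt {K : ℝ × ℝ → ℝ} (hK : ContDiffOn ℝ 1 K U) : DifferentiableAt ℝ K q :=
    (hK.contDiffAt (hU.mem_nhds (hQU hq))).differentiableAt one_ne_zero
  rw [pderivX_mul (hdiffAt hu₁) (hdiffAt hux), pderivY_mul (hdiffAt hu₁) (hdiffAt huy), lap]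
  ring

theorem eqOn_zero_of_hasZeroNeumannData_of_mul_lap_nonneg {σ κ : ℝ} (hσ : 0 < σ) (hκ : 0 < κ)
    {u v : ℝ × ℝ → ℝ} (hx : x₀ ≤ x₁) (hy : y₀ ≤ y₁) (hU : IsOpen U)
    (hQU : Icc x₀ x₁ ×ˢ Icc y₀ y₁ ⊆ U) (hu : ContDiffOn ℝ 2 u U) (hv : ContDiffOn ℝ 2 v U)
    (hNu : HasZeroNeumannData u x₀ x₁ y₀ y₁) (hNv : HasZeroNeumannData v x₀ x₁ y₀ y₁)
    (hR : ∀ p ∈ Icc x₀ x₁ ×ˢ Icc y₀ y₁, 0 ≤ σ * (u p * lap u p) + κ * (v p * lap v p)) :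
    EqOn (fun p => σ * (u p * lap u p + (pderivX u p ^ 2 + pderivY u p ^ 2)) +
      κ * (v p * lap v p + (pderivX v p ^ 2 + pderivY v p ^ 2))) 0 (Ioo x₀ x₁ ×ˢ Ioo y₀ y₁) := by
  have hcont {w : ℝ × ℝ → ℝ} (hw : ContDiffOn ℝ 2 w U) :
      ContinuousOn (fun p => w p * lap w p + (pderivX w p ^ 2 + pderivY w p ^ 2)) U :=
    (hw.continuousOn.mul (hw.continuousOn_lap hU)).add
      (((hw.pderivX_of_isOpen hU (m := 0) (by norm_num)).continuousOn.pow 2).add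
        ((hw.pderivY_of_isOpen hU (m := 0) (by norm_num)).continuousOn.pow 2))
  have hint {w : ℝ × ℝ → ℝ} (hw : ContDiffOn ℝ 2 w U) :=
    ((hcont hw).mono hQU).integrableOn_compact (μ := volume) (isCompact_Icc.prod isCompact_Icc)
  have hsub : Ioo x₀ x₁ ×ˢ Ioo y₀ y₁ ⊆ Icc x₀ x₁ ×ˢ Icc y₀ y₁ :=
    Set.prod_mono Ioo_subset_Icc_self Ioo_subset_Icc_self
  refine eqOn_zero_of_setIntegral_eq_zero_of_nonneg (isOpen_Ioo.prod isOpen_Ioo) hsub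
    (measurableSet_Icc.prod measurableSet_Icc)
    ((((hcont hu).const_smul σ).add ((hcont hv).const_smul κ)).mono (hsub.trans hQU))
    (fun p hp => ?_) (((hint hu).const_mul σ).add ((hint hv).const_mul κ)) ?_
  · have hu₂ : 0 ≤ σ * (pderivX u p ^ 2 + pderivY u p ^ 2) := by positivity
    have hv₂ : 0 ≤ κ * (pderivX v p ^ 2 + pderivY v p ^ 2) := by positivity
    linarith [hR p hp]
  · rw [integral_add ((hint hu).const_mul σ) ((hint hv).const_mul κ), integral_const_mul,
      integral_const_mul, setIntegral_mul_lap_add_sq_eq_zero hx hy hU hQU hu hNu,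
      setIntegral_mul_lap_add_sq_eq_zero hx hy hU hQU hv hNv]
    ring

theorem fderiv_eq_zero_of_hasZeroNeumannData_of_mul_lap_nonneg {σ κ : ℝ} (hσ : 0 < σ)
    (hκ : 0 < κ) {u v : ℝ × ℝ → ℝ} (hx : x₀ ≤ x₁) (hy : y₀ ≤ y₁) (hU : IsOpen U)
    (hQU : Icc x₀ x₁ ×ˢ Icc y₀ y₁ ⊆ U) (hu : ContDiffOn ℝ 2 u U) (hv : ContDiffOn ℝ 2 v U)
    (hNu : HasZeroNeumannData u x₀ x₁ y₀ y₁) (hNv : HasZeroNeumannData v x₀ x₁ y₀ y₁)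
    (hR : ∀ p ∈ Icc x₀ x₁ ×ˢ Icc y₀ y₁, 0 ≤ σ * (u p * lap u p) + κ * (v p * lap v p)) :
    ∀ p ∈ Ioo x₀ x₁ ×ˢ Ioo y₀ y₁, fderiv ℝ u p = 0 ∧ fderiv ℝ v p = 0 ∧
      σ * (u p * lap u p) + κ * (v p * lap v p) = 0 := by
  intro p hp
  have hpQ : p ∈ Icc x₀ x₁ ×ˢ Icc y₀ y₁ := Set.prod_mono Ioo_subset_Icc_self Ioo_subset_Icc_self hp
  have hep := eqOn_zero_of_hasZeroNeumannData_of_mul_lap_nonneg hσ hκ hx hy hU hQU hu hv hNu hNv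
    hR hp
  have hRp := hR p hpQ
  simp only [Pi.zero_apply] at hep
  obtain ⟨hux, huy, hvx, hvy⟩ : pderivX u p = 0 ∧ pderivY u p = 0 ∧
      pderivX v p = 0 ∧ pderivY v p = 0 := by
    refine ⟨?_, ?_, ?_, ?_⟩ <;> refine (pow_eq_zero_iff two_ne_zero).1 ?_ <;>
      nlinarith [sq_nonneg (pderivX u p), sq_nonneg (pderivY u p), sq_nonneg (pderivX v p),
        sq_nonneg (pderivY v p)]
  have hdiffAt {w : ℝ × ℝ → ℝ} (hw : ContDiffOn ℝ 2 w U) : DifferentiableAt ℝ w p :=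
    (hw.contDiffAt (hU.mem_nhds (hQU hpQ))).differentiableAt two_ne_zero
  refine ⟨fderiv_eq_zero_of_pderivX_of_pderivY (hdiffAt hu) hux huy,
    fderiv_eq_zero_of_pderivX_of_pderivY (hdiffAt hv) hvx hvy, ?_⟩
  simp only [hux, huy, hvx, hvy] at hep
  linarith

theorem exists_eqOn_const_of_fderiv_eq_zero {u : ℝ × ℝ → ℝ} (hx : x₀ < x₁) (hy : y₀ < y₁)
    (hQU : Icc x₀ x₁ ×ˢ Icc y₀ y₁ ⊆ U) (hu : DifferentiableOn ℝ u U)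
    (hu' : EqOn (fderiv ℝ u) 0 (Ioo x₀ x₁ ×ˢ Ioo y₀ y₁)) :
    ∃ c, ∀ p ∈ Icc x₀ x₁ ×ˢ Icc y₀ y₁, u p = c := by
  have hsub : Ioo x₀ x₁ ×ˢ Ioo y₀ y₁ ⊆ Icc x₀ x₁ ×ˢ Icc y₀ y₁ :=
    Set.prod_mono Ioo_subset_Icc_self Ioo_subset_Icc_self
  obtain ⟨c, hc⟩ := (isOpen_Ioo.prod isOpen_Ioo).exists_is_const_of_fderiv_eq_zero
    ((convex_Ioo x₀ x₁).prod (convex_Ioo y₀ y₁)).isPreconnected (hu.mono (hsub.trans hQU)) hu'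
  refine ⟨c, EqOn.of_subset_closure hc (hu.continuousOn.mono hQU) continuousOn_const hsub ?_⟩
  rw [closure_prod_eq, closure_Ioo hx.ne, closure_Ioo hy.ne]

theorem exists_eq_add_const_of_fderiv_sub_eq_zero {f₁ f₂ g₁ g₂ : ℝ × ℝ → ℝ} (hx : x₀ < x₁)
    (hy : y₀ < y₁) (hQU : Icc x₀ x₁ ×ˢ Icc y₀ y₁ ⊆ U) (hf : DifferentiableOn ℝ (f₁ - f₂) U)
    (hg : DifferentiableOn ℝ (g₁ - g₂) U)
    (hf' : EqOn (fderiv ℝ (f₁ - f₂)) 0 (Ioo x₀ x₁ ×ˢ Ioo y₀ y₁))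
    (hg' : EqOn (fderiv ℝ (g₁ - g₂)) 0 (Ioo x₀ x₁ ×ˢ Ioo y₀ y₁)) {p₀ : ℝ × ℝ}
    (hp₀ : p₀ ∈ Icc x₀ x₁ ×ˢ Icc y₀ y₁) (hfg : f₁ p₀ - f₂ p₀ = g₁ p₀ - g₂ p₀) :
    ∃ C, ∀ p ∈ Icc x₀ x₁ ×ˢ Icc y₀ y₁, f₁ p = f₂ p + C ∧ g₁ p = g₂ p + C := by
  obtain ⟨c, hc⟩ := exists_eqOn_const_of_fderiv_eq_zero hx hy hQU hf hf'
  obtain ⟨d, hd⟩ := exists_eqOn_const_of_fderiv_eq_zero hx hy hQU hg hg'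
  have hcd : c = d := by
    rw [← hc p₀ hp₀, ← hd p₀ hp₀]
    exact hfg
  refine ⟨c, fun p hp => ⟨?_, ?_⟩⟩
  · linarith [hc p hp, Pi.sub_apply f₁ f₂ p]
  · linarith [hd p hp, Pi.sub_apply g₁ g₂ p]

end Rectangle

/-- 2D constant-conductivity uniqueness: two solutions of the coupled porous-electrode
Poisson system on the rectangle `Q = [0,W] × [0,H]` with the same Neumann data on `∂Q`
coincide up to a shared additive constant. -/
theorem uniqueness_up_to_shared_constant_2D
    (W H : ℝ) (hW : 0 < W) (hH : 0 < H)
    (σ κ : ℝ) (hσ : 0 < σ) (hκ : 0 < κ)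
    (a b E : ℝ) (ha : 0 < a) (hb : 0 < b)
    (φe₁ φl₁ φe₂ φl₂ : ℝ × ℝ → ℝ)
    (U : Set (ℝ × ℝ)) (hU : IsOpen U) (hQU : Icc (0:ℝ) W ×ˢ Icc (0:ℝ) H ⊆ U)
    (hφe₁ : ContDiffOn ℝ 2 φe₁ U) (hφl₁ : ContDiffOn ℝ 2 φl₁ U)
    (hφe₂ : ContDiffOn ℝ 2 φe₂ U) (hφl₂ : ContDiffOn ℝ 2 φl₂ U)
    (heq₁ : ∀ p ∈ Icc (0:ℝ) W ×ˢ Icc (0:ℝ) H,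
      σ * lap φe₁ p = a * Real.sinh (b * (φe₁ p - φl₁ p - E)) ∧
      κ * lap φl₁ p = -(a * Real.sinh (b * (φe₁ p - φl₁ p - E))))
    (heq₂ : ∀ p ∈ Icc (0:ℝ) W ×ˢ Icc (0:ℝ) H,
      σ * lap φe₂ p = a * Real.sinh (b * (φe₂ p - φl₂ p - E)) ∧
      κ * lap φl₂ p = -(a * Real.sinh (b * (φe₂ p - φl₂ p - E))))
    (hbcX : ∀ x ∈ ({0, W} : Set ℝ), ∀ y ∈ Icc (0:ℝ) H,
      pderivX φe₁ (x, y) = pderivX φe₂ (x, y) ∧ pderivX φl₁ (x, y) = pderivX φl₂ (x, y))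
    (hbcY : ∀ x ∈ Icc (0:ℝ) W, ∀ y ∈ ({0, H} : Set ℝ),
      pderivY φe₁ (x, y) = pderivY φe₂ (x, y) ∧ pderivY φl₁ (x, y) = pderivY φl₂ (x, y)) :
    ∃ C : ℝ, ∀ p ∈ Icc (0:ℝ) W ×ˢ Icc (0:ℝ) H,
      φe₁ p = φe₂ p + C ∧ φl₁ p = φl₂ p + C := by
  have hdiff {f : ℝ × ℝ → ℝ} (hf : ContDiffOn ℝ 2 f U) : DifferentiableOn ℝ f U :=
    hf.differentiableOn two_ne_zero
  set j : ℝ → ℝ := fun t => a * Real.sinh (b * t)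
  have hj : StrictMono j := (Real.sinh_strictMono.comp (strictMono_mul_left_of_pos hb)).const_mul ha
  set η₁ : ℝ × ℝ → ℝ := fun p => φe₁ p - φl₁ p - E
  set η₂ : ℝ × ℝ → ℝ := fun p => φe₂ p - φl₂ p - E
  have hreact : ∀ p ∈ Icc 0 W ×ˢ Icc 0 H,
      σ * ((φe₁ - φe₂) p * lap (φe₁ - φe₂) p) + κ * ((φl₁ - φl₂) p * lap (φl₁ - φl₂) p) =
        (j (η₁ p) - j (η₂ p)) * (η₁ p - η₂ p) := fun p hp => by
    rw [lap_sub hφe₁ hφe₂ hU (hQU hp), lap_sub hφl₁ hφl₂ hU (hQU hp), Pi.sub_apply, Pi.sub_apply]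
    linear_combination (φe₁ p - φe₂ p) * ((heq₁ p hp).1 - (heq₂ p hp).1) +
      (φl₁ p - φl₂ p) * ((heq₁ p hp).2 - (heq₂ p hp).2)
  have hgrad := fderiv_eq_zero_of_hasZeroNeumannData_of_mul_lap_nonneg hσ hκ hW.le hH.le hU hQU
    (hφe₁.sub hφe₂) (hφl₁.sub hφl₂)
    (.sub hW.le hH.le hU hQU (hdiff hφe₁) (hdiff hφe₂) (fun x hx y hy => (hbcX x hx y hy).1)
      (fun x hx y hy => (hbcY x hx y hy).1))
    (.sub hW.le hH.le hU hQU (hdiff hφl₁) (hdiff hφl₂) (fun x hx y hy => (hbcX x hx y hy).2)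
      (fun x hx y hy => (hbcY x hx y hy).2))
    fun p hp => (hreact p hp).symm ▸ hj.monotone.sub_mul_sub_nonneg _ _
  have hp₀ : ((W / 2, H / 2) : ℝ × ℝ) ∈ Ioo 0 W ×ˢ Ioo 0 H :=
    ⟨⟨by linarith, by linarith⟩, by linarith, by linarith⟩
  have hp₀Q := Set.prod_mono Ioo_subset_Icc_self Ioo_subset_Icc_self hp₀
  have hη : η₁ (W / 2, H / 2) = η₂ (W / 2, H / 2) :=
    hj.eq_of_sub_mul_sub_eq_zero ((hreact _ hp₀Q).symm.trans (hgrad _ hp₀).2.2)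
  exact exists_eq_add_const_of_fderiv_sub_eq_zero hW hH hQU ((hdiff hφe₁).sub (hdiff hφe₂))
    ((hdiff hφl₁).sub (hdiff hφl₂)) (fun p hp => (hgrad p hp).1) (fun p hp => (hgrad p hp).2.1)
    hp₀Q (by simp only [η₁, η₂] at hη; linarith)
end
end

section
/- Let W > 0, b > 0, c > 0. Suppose η₁, η₂ : ℝ → ℝ are twice continuously differentiable on [0,W], satisfy ηᵢ''(x) = c·sinh(b·ηᵢ(x)) for all x ∈ [0,W] (i = 1, 2), and have equal Neumann data: η₁'(0) = η₂'(0) and η₁'(W) = η₂'(W). Then η₁(x) = η₂(x) for all x ∈ [0,W]; i.e., the Neumann boundary-value problem for the reduced overpotential equation has at most one solution (with no additive-constant freedom). -/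
open Set Filter Topology

/-- The Neumann problem for the reduced overpotential equation `η'' = c·sinh(b·η)`
(with `b, c > 0`) has at most one solution on `[0,W]` — with no additive-constant freedom. -/
theorem reduced_equation_neumann_uniqueness
    (W : ℝ) (hW : 0 < W) (b c : ℝ) (hb : 0 < b) (hc : 0 < c)
    (η₁ η₂ η₁' η₂' : ℝ → ℝ)
    (hη₁ : ∀ x ∈ Icc (0:ℝ) W, HasDerivAt η₁ (η₁' x) x)
    (hη₂ : ∀ x ∈ Icc (0:ℝ) W, HasDerivAt η₂ (η₂' x) x)
    (hη₁' : ∀ x ∈ Icc (0:ℝ) W, HasDerivAt η₁' (c * Real.sinh (b * η₁ x)) x)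
    (hη₂' : ∀ x ∈ Icc (0:ℝ) W, HasDerivAt η₂' (c * Real.sinh (b * η₂ x)) x)
    (hbc0 : η₁' 0 = η₂' 0) (hbcW : η₁' W = η₂' W) :
    ∀ x ∈ Icc (0:ℝ) W, η₁ x = η₂ x := by
  set u : ℝ → ℝ := fun x => η₁ x - η₂ x with hu_def
  set v : ℝ → ℝ := fun x => η₁' x - η₂' x with hv_def
  have hu : ∀ x ∈ Icc (0:ℝ) W, HasDerivAt u (v x) x :=
    fun x hx => (hη₁ x hx).sub (hη₂ x hx)
  have hv : ∀ x ∈ Icc (0:ℝ) W,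
      HasDerivAt v (c * Real.sinh (b * η₁ x) - c * Real.sinh (b * η₂ x)) x :=
    fun x hx => (hη₁' x hx).sub (hη₂' x hx)
  set g : ℝ → ℝ := fun x => u x * v x with hg_def
  have hg : ∀ x ∈ Icc (0:ℝ) W,
      HasDerivAt g (v x * v x + u x * (c * Real.sinh (b * η₁ x) - c * Real.sinh (b * η₂ x))) x :=
    fun x hx => (hu x hx).mul (hv x hx)
  -- pointwise sign facts
  have hterm2 : ∀ x, 0 ≤ u x * (c * Real.sinh (b * η₁ x) - c * Real.sinh (b * η₂ x)) := by
    intro x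
    rcases le_total (η₁ x) (η₂ x) with h | h
    · have hs : Real.sinh (b * η₁ x) ≤ Real.sinh (b * η₂ x) :=
        Real.sinh_le_sinh.mpr (mul_le_mul_of_nonneg_left h hb.le)
      have h1 : u x ≤ 0 := sub_nonpos.mpr h
      have h3 : c * Real.sinh (b * η₁ x) - c * Real.sinh (b * η₂ x) ≤ 0 := by
        have := mul_le_mul_of_nonneg_left hs hc.le; linarith
      nlinarith [mul_nonneg (neg_nonneg.mpr h1) (neg_nonneg.mpr h3)]
    · have hs : Real.sinh (b * η₂ x) ≤ Real.sinh (b * η₁ x) :=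
        Real.sinh_le_sinh.mpr (mul_le_mul_of_nonneg_left h hb.le)
      have h1 : 0 ≤ u x := sub_nonneg.mpr h
      have h3 : 0 ≤ c * Real.sinh (b * η₁ x) - c * Real.sinh (b * η₂ x) := by
        have := mul_le_mul_of_nonneg_left hs hc.le; linarith
      exact mul_nonneg h1 h3
  have hderiv_nonneg : ∀ x ∈ Icc (0:ℝ) W,
      0 ≤ v x * v x + u x * (c * Real.sinh (b * η₁ x) - c * Real.sinh (b * η₂ x)) :=
    fun x _ => add_nonneg (mul_self_nonneg _) (hterm2 x)
  -- g is monotone on [0,W]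
  have hmono : MonotoneOn g (Icc (0:ℝ) W) := by
    apply monotoneOn_of_deriv_nonneg (convex_Icc 0 W)
    · exact fun x hx => (hg x hx).continuousAt.continuousWithinAt
    · intro x hx
      rw [interior_Icc] at hx
      exact (hg x (Ioo_subset_Icc_self hx)).differentiableAt.differentiableWithinAt
    · intro x hx
      rw [interior_Icc] at hx
      rw [(hg x (Ioo_subset_Icc_self hx)).deriv]
      exact hderiv_nonneg x (Ioo_subset_Icc_self hx)
  have hv0 : v 0 = 0 := sub_eq_zero.mpr hbc0
  have hvW : v W = 0 := sub_eq_zero.mpr hbcW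
  have hg0 : g 0 = 0 := by simp [hg_def, hv0]
  have hgW : g W = 0 := by simp [hg_def, hvW]
  have hgzero : ∀ x ∈ Icc (0:ℝ) W, g x = 0 := by
    intro x hx
    have h1 : g 0 ≤ g x := hmono (left_mem_Icc.mpr hW.le) hx hx.1
    have h2 : g x ≤ g W := hmono hx (right_mem_Icc.mpr hW.le) hx.2
    linarith [hg0 ▸ h1, hgW ▸ h2]
  -- on the interior, g' = 0, which forces u = 0
  have huzero : ∀ x ∈ Ioo (0:ℝ) W, u x = 0 := by
    intro x hx
    have hx' : x ∈ Icc (0:ℝ) W := Ioo_subset_Icc_self hx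
    have hEq : g =ᶠ[𝓝 x] fun _ => (0:ℝ) :=
      eventually_of_mem (isOpen_Ioo.mem_nhds hx)
        (fun y hy => hgzero y (Ioo_subset_Icc_self hy))
    have hgd0 : HasDerivAt g 0 x :=
      (hasDerivAt_const x (0:ℝ)).congr_of_eventuallyEq hEq
    have hzero : v x * v x + u x * (c * Real.sinh (b * η₁ x) - c * Real.sinh (b * η₂ x)) = 0 :=
      (hg x hx').unique hgd0
    have h2 : u x * (c * Real.sinh (b * η₁ x) - c * Real.sinh (b * η₂ x)) = 0 := by
      nlinarith [mul_self_nonneg (v x), hterm2 x]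
    by_contra hne
    rcases lt_or_gt_of_ne hne with h | h
    · have hlt : η₁ x < η₂ x := by simpa [hu_def, sub_neg] using h
      have hs : Real.sinh (b * η₁ x) < Real.sinh (b * η₂ x) :=
        Real.sinh_lt_sinh.mpr (by nlinarith)
      have h3 : c * Real.sinh (b * η₁ x) - c * Real.sinh (b * η₂ x) < 0 := by
        have := mul_lt_mul_of_pos_left hs hc; linarith
      nlinarith [mul_pos_of_neg_of_neg h h3]
    · have hlt : η₂ x < η₁ x := by simpa [hu_def, sub_pos] using h
      have hs : Real.sinh (b * η₂ x) < Real.sinh (b * η₁ x) :=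
        Real.sinh_lt_sinh.mpr (by nlinarith)
      have h3 : 0 < c * Real.sinh (b * η₁ x) - c * Real.sinh (b * η₂ x) := by
        have := mul_lt_mul_of_pos_left hs hc; linarith
      nlinarith [mul_pos h h3]
  -- extend to the closed interval by continuity
  intro x hx
  have hx' : x ∈ closure (Ioo (0:ℝ) W) := by
    rw [closure_Ioo hW.ne]; exact hx
  have hnb : (𝓝[Ioo (0:ℝ) W] x).NeBot := mem_closure_iff_nhdsWithin_neBot.mp hx'
  have h1 : Tendsto u (𝓝[Ioo (0:ℝ) W] x) (𝓝 (u x)) :=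
    ((hu x hx).continuousAt.continuousWithinAt).tendsto
  have h2 : Tendsto u (𝓝[Ioo (0:ℝ) W] x) (𝓝 0) := by
    refine tendsto_const_nhds.congr' ?_
    filter_upwards [self_mem_nhdsWithin] with y hy
    exact (huzero y hy).symm
  have := tendsto_nhds_unique h1 h2
  simpa [hu_def, sub_eq_zero] using this
end
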